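/- For every k ≥ 2, the set of Pauli polynomials of degree at most k equals the k-th level of the Clifford hierarchy: P^{(k)} = C^{(k)}. -/

import Mathlib

open Matrix Complex

namespace CH

variable (d n : ℕ) [NeZero d]

/-- Phase space `F_d^{2n}`, written as pairs `(u, v)` with `u, v ∈ F_d^n`. -/
abbrev PSpace := (Fin n → ZMod d) × (Fin n → ZMod d)

/-- Linear maps on `ℂ^{F_d^n}`, as matrices. -/
abbrev Mat := Matrix (Fin n → ZMod d) (Fin n → ZMod d) ℂ

/-- `ω = e^{2πi/d}`. -/
noncomputable def omg : ℂ := Complex.exp (2 * Real.pi * Complex.I / d)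

/-- `τ = (-1)^d e^{iπ/d}`. -/
noncomputable def tau : ℂ := (-1 : ℂ) ^ d * Complex.exp (Real.pi * Complex.I / d)

/-- `D = 2d` if `d = 2`, else `D = d`. -/
def Dd : ℕ := if d = 2 then 4 else d

/-- The translation operator `X^v`, with `X^v |u⟩ = |u + v⟩`. -/
noncomputable def Xop (v : Fin n → ZMod d) : Mat d n :=
  Matrix.of fun u u' => if u = u' + v then 1 else 0

/-- The phase operator `Z^v`, with `Z^v |u⟩ = ω^{u·v} |u⟩`. -/
noncomputable def Zop (v : Fin n → ZMod d) : Mat d n :=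
  Matrix.diagonal fun u => omg d ^ (∑ i, u i * v i : ZMod d).val

/-- The Weyl operator `W_{(u,v)} = τ^{-(|u₁v₁| + ⋯ + |uₙvₙ|)} Z^u X^v`. -/
noncomputable def Weyl (a : PSpace d n) : Mat d n :=
  tau d ^ (-(∑ i, ((a.1 i * a.2 i).val : ℤ))) • (Zop d n a.1 * Xop d n a.2)

/-- Normalized trace inner product `⟨A,B⟩ = d^{-n} tr(A* B)`. -/
noncomputable def trInner (A B : Mat d n) : ℂ := ((d : ℂ) ^ n)⁻¹ * (Aᴴ * B).trace

/-- Normalized Frobenius norm `‖A‖₂ = ⟨A,A⟩^{1/2}`. -/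
noncomputable def hsNorm (A : Mat d n) : ℝ := Real.sqrt (trInner d n A A).re

/-- Pauli derivative `∂_h U = W_h U W_h* U*`. -/
noncomputable def pderiv (h : PSpace d n) (U : Mat d n) : Mat d n :=
  Weyl d n h * U * (Weyl d n h)ᴴ * Uᴴ

/-- The quantity `‖U‖_{P^k}^{2^k} = E_{h₁,…,h_k} d^{-n} tr(∂_{h_k} ⋯ ∂_{h₁} U)`. -/
noncomputable def pq : ℕ → Mat d n → ℂ
  | 0, U => ((d : ℂ) ^ n)⁻¹ * U.trace
  | (k+1), U => ((d : ℂ) ^ (2*n))⁻¹ * ∑ h : PSpace d n, pq k (pderiv d n h U)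

/-- The `k`-th Pauli uniformity norm `‖U‖_{P^k}`, the `2^k`-th root of `pq k U`. -/
noncomputable def pnorm (k : ℕ) (U : Mat d n) : ℝ := (pq d n k U).re ^ (((2:ℝ) ^ k)⁻¹)

/-- The Pauli group `C^{(1)} = {τ^p W_h : p ∈ Z_D, h ∈ F_d^{2n}}`. -/
def pauliGroup : Set (Mat d n) :=
  {U | ∃ (p : ℕ) (h : PSpace d n), U = tau d ^ p • Weyl d n h}

/-- The Clifford hierarchy. -/
def cliff : ℕ → Set (Mat d n)
  | 0 => {U | ∃ θ : ℝ, U = Complex.exp (θ * Complex.I) • (1 : Mat d n)}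
  | 1 => pauliGroup d n
  | (k+2) => {U | U ∈ unitary (Mat d n) ∧
      ∀ P ∈ pauliGroup d n, U * P * Uᴴ ∈ cliff (k+1)}

/-- Pauli polynomials of degree at most `k`. -/
def ppoly : ℕ → Set (Mat d n)
  | 0 => {U | ∃ θ : ℝ, U = Complex.exp (θ * Complex.I) • (1 : Mat d n)}
  | (k+1) => {U | U ∈ unitary (Mat d n) ∧ ∀ h : PSpace d n, pderiv d n h U ∈ ppoly k}

/-- Symplectic form `[(u,v),(u',v')] = u·v' - u'·v` on `F_d^{2n}`. -/
def symp (a b : PSpace d n) : ZMod d :=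
  (∑ i, a.1 i * b.2 i) - (∑ i, b.1 i * a.2 i)

/-- Multiplication of the Heisenberg group. -/
def heisMul (β : PSpace d n → PSpace d n → ZMod (Dd d))
    (x y : ZMod (Dd d) × PSpace d n) : ZMod (Dd d) × PSpace d n :=
  (x.1 + y.1 + β x.2 y.2, x.2 + y.2)

/-!
Conjugation by a unitary `U` turns a Weyl operator into a Pauli derivative,
`U W_b U* = W_b ∂_{-b} U`, and conversely `∂_h V = W_h (V W_h* V*)`. Since multiplication by
Pauli operators preserves every level of the hierarchy, this gives `C^{(k)} ⊆ P^{(k)}` for all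
`k ≥ 1` and lets `P^{(k)} ⊆ C^{(k)}` pass from `k` to `k + 1`.

For the base case `k = 2`, a unitary `V ∈ P^{(1)}` satisfies `W_h V W_h* = c_h V`. The phases
`c_h` form a character of `F_d^{2n}`, so `c_h = ω^{[h,g]}` for some `g`; then `V W_g*` commutes
with all Weyl operators and is a scalar, i.e. `V = c W_g`. For `U ∈ P^{(2)}` this gives
`U W_b U* = c W_{b+g}`, and `W_a^d = 1` (here `d` prime is used) forces `c^d = 1`, so `c` is a
power of `τ`.
-/

variable {d n : ℕ}

open ZMod (stdAddChar)

section Phases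

lemma mem_unitary_of_norm_eq_one {c : ℂ} (hc : ‖c‖ = 1) : c ∈ unitary ℂ :=
  Unitary.mem_iff_star_mul_self.2 <| by rw [RCLike.star_def, Complex.conj_mul', hc]; simp

lemma tau_sq : tau d ^ 2 = omg d := by
  rw [tau, omg, mul_pow, ← pow_mul, mul_comm d 2, pow_mul, ← Complex.exp_nat_mul]
  norm_num
  ring_nf

lemma norm_tau : ‖tau d‖ = 1 := by
  have : (Real.pi : ℂ) * Complex.I / d = ((Real.pi / d : ℝ) : ℂ) * Complex.I := by
    push_cast; ring
  rw [tau, norm_mul, norm_pow, norm_neg, norm_one, one_pow, one_mul, this,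
    Complex.norm_exp_ofReal_mul_I]

lemma tau_ne_zero : tau d ≠ 0 :=
  norm_ne_zero_iff.1 (norm_tau.trans_ne one_ne_zero)

lemma tau_mem_unitary : tau d ∈ unitary ℂ := mem_unitary_of_norm_eq_one norm_tau

lemma powers_tau_le_unitary : Submonoid.powers (tau d) ≤ unitary ℂ :=
  Submonoid.powers_le.2 tau_mem_unitary

lemma tau_pow_mem_powers (p : ℕ) : tau d ^ p ∈ Submonoid.powers (tau d) :=
  pow_mem (Submonoid.mem_powers _) p

variable [NeZero d]

lemma omg_zpow (z : ℤ) : omg d ^ z = stdAddChar (z : ZMod d) := by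
  rw [omg, ← Complex.exp_int_mul, ZMod.stdAddChar_coe]
  ring_nf

lemma omg_pow_val (x : ZMod d) : omg d ^ x.val = stdAddChar x := by
  rw [← zpow_natCast, omg_zpow, Int.cast_natCast, ZMod.natCast_zmod_val]

lemma tau_pow_two_mul : tau d ^ (2 * d) = 1 := by
  rw [pow_mul, tau_sq, ← zpow_natCast, omg_zpow]
  simp

lemma tau_pow_of_odd (hd : Odd d) : tau d ^ d = 1 := by
  have : (d : ℂ) * ((Real.pi : ℂ) * Complex.I / d) = Real.pi * Complex.I :=
    mul_div_cancel₀ _ (Nat.cast_ne_zero.2 (NeZero.ne d))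
  rw [tau, mul_pow, ← pow_mul, ← Complex.exp_nat_mul, this, Complex.exp_pi_mul_I,
    (hd.mul hd).neg_one_pow]
  norm_num

lemma tau_zpow_mem_powers (z : ℤ) : tau d ^ z ∈ Submonoid.powers (tau d) := by
  have hm : ((2 * d : ℕ) : ℤ) ≠ 0 := by have := NeZero.ne d; positivity
  refine (Submonoid.mem_powers_iff _ _).2 ⟨(z % (2 * d : ℕ)).toNat, ?_⟩
  conv_rhs => rw [← Int.emod_add_mul_ediv z (2 * d : ℕ)]
  rw [zpow_add₀ tau_ne_zero, _root_.zpow_mul, zpow_natCast,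
    tau_pow_two_mul, _root_.one_zpow, mul_one, ← zpow_natCast,
    Int.toNat_of_nonneg (Int.emod_nonneg _ hm)]

lemma star_mem_powers_tau {t : ℂ} (ht : t ∈ Submonoid.powers (tau d)) :
    star t ∈ Submonoid.powers (tau d) := by
  obtain ⟨p, rfl⟩ := (Submonoid.mem_powers_iff _ _).1 ht
  rw [eq_inv_of_mul_eq_one_left (Unitary.star_mul_self_of_mem (powers_tau_le_unitary ht)),
    ← zpow_natCast, ← _root_.zpow_neg]
  exact tau_zpow_mem_powers _

lemma stdAddChar_mem_powers_tau (x : ZMod d) : stdAddChar x ∈ Submonoid.powers (tau d) :=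
  (Submonoid.mem_powers_iff _ _).2 ⟨2 * x.val, by rw [pow_mul, tau_sq, omg_pow_val]⟩

/-- The phase of `Weyl a ^ d`, where `S = ∑ᵢ |a₁ᵢ a₂ᵢ|`. -/
lemma tau_zpow_pow_mul_stdAddChar (hd : d = 2 ∨ Odd d) (S : ℤ) :
    (tau d ^ (-S)) ^ d * stdAddChar (-((d.choose 2 : ℕ) : ZMod d) * (S : ZMod d)) = 1 := by
  rcases hd with rfl | ⟨m, hm⟩
  · rw [← zpow_natCast, ← _root_.zpow_mul, mul_comm (-S), _root_.zpow_mul, zpow_natCast,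
      tau_sq, omg_zpow, ← AddChar.map_add_eq_mul, Nat.choose_self]
    convert AddChar.map_zero_eq_one _
    push_cast
    ring_nf
    rw [show (2 : ZMod 2) = 0 from rfl, mul_zero, neg_zero]
  · have hchoose : d.choose 2 = d * m := by
      rw [Nat.choose_two_right, hm, Nat.add_sub_cancel, mul_comm 2 m, ← mul_assoc,
        Nat.mul_div_cancel _ two_pos]
    rw [← zpow_natCast, ← _root_.zpow_mul, mul_comm (-S), _root_.zpow_mul, zpow_natCast,
      tau_pow_of_odd ⟨m, hm⟩, _root_.one_zpow, hchoose, Nat.cast_mul, ZMod.natCast_self]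
    simp

end Phases

section ShiftAndClock

lemma Xop_zero : Xop d n 0 = 1 := by
  ext a b
  simp [Xop, one_apply]

lemma conjTranspose_Xop (v : Fin n → ZMod d) : (Xop d n v)ᴴ = Xop d n (-v) := by
  ext a b
  have hab : a = b + -v ↔ b = a + v := by
    rw [← sub_eq_add_neg, eq_sub_iff_add_eq, eq_comm]
  simp only [conjTranspose_apply, Xop, of_apply, hab]
  split_ifs <;> simp

variable [NeZero d]

lemma Zop_eq_diagonal (v : Fin n → ZMod d) :
    Zop d n v = diagonal fun u => stdAddChar (u ⬝ᵥ v) := by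
  simp only [Zop, omg_pow_val, dotProduct]

lemma Xop_mul_apply (v : Fin n → ZMod d) (M : Mat d n) (a b : Fin n → ZMod d) :
    (Xop d n v * M) a b = M (a - v) b := by
  rw [mul_apply, Finset.sum_eq_single (a - v)]
  · simp [Xop]
  · intro c _ hc
    simp only [Xop, of_apply, ite_mul, one_mul, zero_mul]
    exact if_neg fun h => hc (by rw [h, add_sub_cancel_right])
  · simp

lemma mul_Xop_apply (v : Fin n → ZMod d) (M : Mat d n) (a b : Fin n → ZMod d) :
    (M * Xop d n v) a b = M a (b + v) := by
  rw [mul_apply, Finset.sum_eq_single (b + v)]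
  · simp [Xop]
  · intro c _ hc
    simp [Xop, hc]
  · simp

lemma Zop_zero : Zop d n 0 = 1 := by
  simp [Zop_eq_diagonal]

lemma Xop_mul_Xop (v w : Fin n → ZMod d) : Xop d n v * Xop d n w = Xop d n (v + w) := by
  ext a b
  rw [mul_Xop_apply]
  simp [Xop, add_assoc, add_comm w v]

lemma Zop_mul_Zop (u w : Fin n → ZMod d) : Zop d n u * Zop d n w = Zop d n (u + w) := by
  simp only [Zop_eq_diagonal, diagonal_mul_diagonal, dotProduct_add, AddChar.map_add_eq_mul]

lemma conjTranspose_Zop (u : Fin n → ZMod d) : (Zop d n u)ᴴ = Zop d n (-u) := by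
  simp only [Zop_eq_diagonal, diagonal_conjTranspose, dotProduct_neg, AddChar.map_neg_eq_conj]
  rfl

lemma Xop_mul_Zop (u v : Fin n → ZMod d) :
    Xop d n v * Zop d n u = stdAddChar (-(v ⬝ᵥ u)) • (Zop d n u * Xop d n v) := by
  ext a b
  rw [Xop_mul_apply, Matrix.smul_apply, mul_Xop_apply, Zop_eq_diagonal, diagonal_apply,
    diagonal_apply, smul_eq_mul]
  by_cases h : a = b + v
  · rw [if_pos (by rw [h, add_sub_cancel_right]), if_pos h, ← AddChar.map_add_eq_mul,
      sub_dotProduct, dotProduct_comm v, sub_eq_neg_add]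
  · rw [if_neg (fun h' => h (by rw [← h', sub_add_cancel])), if_neg h, mul_zero]

lemma Zop_mul_Xop_mul_Zop_mul_Xop (u v u' v' : Fin n → ZMod d) :
    Zop d n u * Xop d n v * (Zop d n u' * Xop d n v')
      = stdAddChar (-(v ⬝ᵥ u')) • (Zop d n (u + u') * Xop d n (v + v')) := by
  rw [mul_assoc, ← mul_assoc (Xop d n v), Xop_mul_Zop, smul_mul_assoc, mul_smul_comm,
    ← mul_assoc, ← mul_assoc, Zop_mul_Zop, mul_assoc, Xop_mul_Xop]

lemma Zop_mul_Xop_pow (u v : Fin n → ZMod d) (k : ℕ) :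
    (Zop d n u * Xop d n v) ^ k
      = stdAddChar (-((k.choose 2 : ℕ) : ZMod d) * (v ⬝ᵥ u)) •
          (Zop d n (k • u) * Xop d n (k • v)) := by
  induction k with
  | zero => simp [Zop_zero, Xop_zero]
  | succ k ih =>
    rw [pow_succ, ih, smul_mul_assoc, Zop_mul_Xop_mul_Zop_mul_Xop, smul_smul,
      ← AddChar.map_add_eq_mul, ← succ_nsmul, ← succ_nsmul, smul_dotProduct,
      Nat.choose_succ_succ', Nat.choose_one_right]
    push_cast
    ring_nf

lemma Zop_mem_unitary (u : Fin n → ZMod d) : Zop d n u ∈ unitary (Mat d n) := by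
  rw [mem_unitaryGroup_iff', star_eq_conjTranspose, conjTranspose_Zop,
    Zop_mul_Zop, neg_add_cancel, Zop_zero]

lemma Xop_mem_unitary (v : Fin n → ZMod d) : Xop d n v ∈ unitary (Mat d n) := by
  rw [mem_unitaryGroup_iff', star_eq_conjTranspose, conjTranspose_Xop,
    Xop_mul_Xop, neg_add_cancel, Xop_zero]

end ShiftAndClock

lemma symp_eq (a b : PSpace d n) : symp d n a b = a.1 ⬝ᵥ b.2 - b.1 ⬝ᵥ a.2 := rfl

lemma symp_add_left (a b c : PSpace d n) :
    symp d n (a + b) c = symp d n a c + symp d n b c := by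
  simp only [symp_eq, Prod.fst_add, Prod.snd_add, add_dotProduct, dotProduct_add]
  ring

variable [NeZero d]

section Weyl

lemma Weyl_mem_unitary (a : PSpace d n) : Weyl d n a ∈ unitary (Mat d n) :=
  Unitary.smul_mem_of_mem (powers_tau_le_unitary (tau_zpow_mem_powers _))
    (mul_mem (Zop_mem_unitary a.1) (Xop_mem_unitary a.2))

lemma conjTranspose_Weyl_mul_self (a : PSpace d n) : (Weyl d n a)ᴴ * Weyl d n a = 1 :=
  Unitary.star_mul_self_of_mem (Weyl_mem_unitary a)

lemma Weyl_mul_conjTranspose_self (a : PSpace d n) : Weyl d n a * (Weyl d n a)ᴴ = 1 :=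
  Unitary.mul_star_self_of_mem (Weyl_mem_unitary a)

lemma Weyl_mk_zero (u : Fin n → ZMod d) : Weyl d n (u, 0) = Zop d n u := by
  simp [Weyl, Xop_zero]

lemma Weyl_zero_mk (v : Fin n → ZMod d) : Weyl d n (0, v) = Xop d n v := by
  simp [Weyl, Zop_zero]

lemma Weyl_zero : Weyl d n 0 = 1 := by
  rw [Prod.zero_eq_mk, Weyl_mk_zero, Zop_zero]

lemma Weyl_eq_smul_Zop_mul_Xop (a : PSpace d n) :
    ∃ t ∈ Submonoid.powers (tau d), Weyl d n a = t • (Zop d n a.1 * Xop d n a.2) :=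
  ⟨_, tau_zpow_mem_powers _, rfl⟩

lemma Zop_mul_Xop_eq_smul_Weyl (a : PSpace d n) :
    ∃ t ∈ Submonoid.powers (tau d), Zop d n a.1 * Xop d n a.2 = t • Weyl d n a := by
  refine ⟨_, tau_zpow_mem_powers (∑ i, ((a.1 i * a.2 i).val : ℤ)), ?_⟩
  rw [Weyl, smul_smul, ← zpow_add₀ tau_ne_zero,
    add_neg_cancel, zpow_zero, one_smul]

lemma exists_Weyl_mul_Weyl (a b : PSpace d n) :
    ∃ t ∈ Submonoid.powers (tau d), Weyl d n a * Weyl d n b = t • Weyl d n (a + b) := by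
  obtain ⟨s, hs, hsa⟩ := Weyl_eq_smul_Zop_mul_Xop a
  obtain ⟨s', hs', hsb⟩ := Weyl_eq_smul_Zop_mul_Xop b
  obtain ⟨t, ht, hab⟩ := Zop_mul_Xop_eq_smul_Weyl (a + b)
  refine ⟨s * s' * stdAddChar (-(a.2 ⬝ᵥ b.1)) * t,
    mul_mem (mul_mem (mul_mem hs hs') (stdAddChar_mem_powers_tau _)) ht, ?_⟩
  rw [Prod.fst_add, Prod.snd_add] at hab
  rw [hsa, hsb, smul_mul_smul_comm, Zop_mul_Xop_mul_Zop_mul_Xop, hab, smul_smul, smul_smul]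

lemma Weyl_mul_Weyl_comm (a b : PSpace d n) :
    Weyl d n a * Weyl d n b = stdAddChar (symp d n a b) • (Weyl d n b * Weyl d n a) := by
  obtain ⟨s, -, hsa⟩ := Weyl_eq_smul_Zop_mul_Xop a
  obtain ⟨s', -, hsb⟩ := Weyl_eq_smul_Zop_mul_Xop b
  have hphase : -(a.2 ⬝ᵥ b.1) = symp d n a b + -(b.2 ⬝ᵥ a.1) := by
    rw [symp_eq, dotProduct_comm a.2, dotProduct_comm b.2]
    ring
  rw [hsa, hsb, smul_mul_smul_comm, smul_mul_smul_comm, Zop_mul_Xop_mul_Zop_mul_Xop,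
    Zop_mul_Xop_mul_Zop_mul_Xop, add_comm b.1, add_comm b.2, hphase, AddChar.map_add_eq_mul,
    smul_smul, smul_smul, smul_smul, mul_comm s']
  ring_nf

lemma Weyl_mul_Weyl_mul_conjTranspose (a b : PSpace d n) :
    Weyl d n a * Weyl d n b * (Weyl d n a)ᴴ = stdAddChar (symp d n a b) • Weyl d n b := by
  rw [Weyl_mul_Weyl_comm, smul_mul_assoc, mul_assoc, Weyl_mul_conjTranspose_self, mul_one]

lemma exists_conjTranspose_Weyl (a : PSpace d n) :
    ∃ t ∈ Submonoid.powers (tau d), (Weyl d n a)ᴴ = t • Weyl d n (-a) := by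
  obtain ⟨s, hs, hmul⟩ := exists_Weyl_mul_Weyl (-a) a
  rw [neg_add_cancel, Weyl_zero] at hmul
  refine ⟨star s, star_mem_powers_tau hs, ?_⟩
  calc (Weyl d n a)ᴴ = (star s * s) • (Weyl d n a)ᴴ := by
        rw [Unitary.star_mul_self_of_mem (powers_tau_le_unitary hs), one_smul]
    _ = star s • (Weyl d n (-a) * Weyl d n a * (Weyl d n a)ᴴ) := by
        rw [hmul, smul_mul_assoc, one_mul, smul_smul]
    _ = star s • Weyl d n (-a) := by
        rw [mul_assoc, Weyl_mul_conjTranspose_self, mul_one]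

lemma Weyl_pow_eq_one (hd : d = 2 ∨ Odd d) (a : PSpace d n) : Weyl d n a ^ d = 1 := by
  have hS : ((∑ i, ((a.1 i * a.2 i).val : ℤ) : ℤ) : ZMod d) = a.2 ⬝ᵥ a.1 := by
    push_cast [ZMod.natCast_val, ZMod.cast_id', id]
    rw [dotProduct_comm]
    rfl
  have hvanish : ∀ w : Fin n → ZMod d, d • w = 0 := fun w => by ext; simp
  rw [Weyl, smul_pow, Zop_mul_Xop_pow, hvanish, hvanish, Zop_zero, Xop_zero, mul_one, smul_smul,
    ← hS, tau_zpow_pow_mul_stdAddChar hd, one_smul]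

end Weyl

section PauliGroup

lemma smul_Weyl_mem_pauliGroup {t : ℂ} (ht : t ∈ Submonoid.powers (tau d)) (a : PSpace d n) :
    t • Weyl d n a ∈ pauliGroup d n := by
  obtain ⟨p, rfl⟩ := (Submonoid.mem_powers_iff _ _).1 ht
  exact ⟨p, a, rfl⟩

lemma Weyl_mem_pauliGroup (a : PSpace d n) : Weyl d n a ∈ pauliGroup d n :=
  ⟨0, a, by rw [pow_zero, one_smul]⟩

lemma mul_mem_pauliGroup {P Q : Mat d n} (hP : P ∈ pauliGroup d n) (hQ : Q ∈ pauliGroup d n) :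
    P * Q ∈ pauliGroup d n := by
  obtain ⟨p, a, rfl⟩ := hP
  obtain ⟨q, b, rfl⟩ := hQ
  obtain ⟨t, ht, hab⟩ := exists_Weyl_mul_Weyl a b
  rw [smul_mul_smul_comm, hab, smul_smul]
  exact smul_Weyl_mem_pauliGroup
    (mul_mem (mul_mem (tau_pow_mem_powers _) (tau_pow_mem_powers _)) ht) _

lemma conjTranspose_mem_pauliGroup {P : Mat d n} (hP : P ∈ pauliGroup d n) :
    Pᴴ ∈ pauliGroup d n := by
  obtain ⟨p, a, rfl⟩ := hP
  obtain ⟨t, ht, ha⟩ := exists_conjTranspose_Weyl a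
  rw [conjTranspose_smul, ha, smul_smul]
  exact smul_Weyl_mem_pauliGroup
    (mul_mem (star_mem_powers_tau (tau_pow_mem_powers _)) ht) _

lemma mem_unitary_of_mem_pauliGroup {P : Mat d n} (hP : P ∈ pauliGroup d n) :
    P ∈ unitary (Mat d n) := by
  obtain ⟨p, a, rfl⟩ := hP
  exact Unitary.smul_mem_of_mem (pow_mem tau_mem_unitary _) (Weyl_mem_unitary a)

end PauliGroup

section CliffSubsetPpoly

lemma mul_pauli_mem_cliff {m : ℕ} {V P : Mat d n} (hV : V ∈ cliff d n (m + 1))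
    (hP : P ∈ pauliGroup d n) : V * P ∈ cliff d n (m + 1) := by
  cases m with
  | zero => exact mul_mem_pauliGroup hV hP
  | succ m =>
    refine ⟨mul_mem hV.1 (mem_unitary_of_mem_pauliGroup hP), fun Q hQ => ?_⟩
    have : V * P * Q * (V * P)ᴴ = V * (P * Q * Pᴴ) * Vᴴ := by
      simp only [conjTranspose_mul, mul_assoc]
    rw [this]
    exact hV.2 _ (mul_mem_pauliGroup (mul_mem_pauliGroup hP hQ) (conjTranspose_mem_pauliGroup hP))

lemma pauli_mul_mem_cliff {m : ℕ} {V P : Mat d n} (hP : P ∈ pauliGroup d n)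
    (hV : V ∈ cliff d n (m + 1)) : P * V ∈ cliff d n (m + 1) := by
  induction m generalizing V with
  | zero => exact mul_mem_pauliGroup hP hV
  | succ m ih =>
    refine ⟨mul_mem (mem_unitary_of_mem_pauliGroup hP) hV.1, fun Q hQ => ?_⟩
    have : P * V * Q * (P * V)ᴴ = P * (V * Q * Vᴴ) * Pᴴ := by
      simp only [conjTranspose_mul, mul_assoc]
    rw [this]
    exact mul_pauli_mem_cliff (ih (hV.2 Q hQ)) (conjTranspose_mem_pauliGroup hP)

lemma smul_one_mem_ppoly_zero {c : ℂ} (hc : ‖c‖ = 1) :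
    c • (1 : Mat d n) ∈ ppoly d n 0 := by
  obtain ⟨θ, rfl⟩ := (Complex.norm_eq_one_iff c).1 hc
  exact ⟨θ, rfl⟩

lemma pderiv_smul_Weyl {t : ℂ} (ht : t ∈ unitary ℂ) (h a : PSpace d n) :
    pderiv d n h (t • Weyl d n a) = stdAddChar (symp d n h a) • 1 := by
  simp only [pderiv, conjTranspose_smul, mul_smul_comm, smul_mul_assoc, smul_smul,
    Unitary.star_mul_self_of_mem ht, one_smul]
  rw [Weyl_mul_Weyl_mul_conjTranspose, smul_mul_assoc, Weyl_mul_conjTranspose_self]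

lemma cliff_subset_ppoly (m : ℕ) : cliff d n (m + 1) ⊆ ppoly d n (m + 1) := by
  induction m with
  | zero =>
    rintro _ ⟨p, a, rfl⟩
    refine ⟨mem_unitary_of_mem_pauliGroup ⟨p, a, rfl⟩, fun h => ?_⟩
    rw [pderiv_smul_Weyl (pow_mem tau_mem_unitary p)]
    exact smul_one_mem_ppoly_zero (AddChar.norm_apply _ _)
  | succ m ih =>
    intro V hV
    refine ⟨hV.1, fun h => ?_⟩
    have : pderiv d n h V = Weyl d n h * (V * (Weyl d n h)ᴴ * Vᴴ) := by
      simp only [pderiv, mul_assoc]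
    rw [this]
    exact ih (pauli_mul_mem_cliff (Weyl_mem_pauliGroup h)
      (hV.2 _ (conjTranspose_mem_pauliGroup (Weyl_mem_pauliGroup h))))

end CliffSubsetPpoly

section DegreeOne

noncomputable def sympChar (g : PSpace d n) : AddChar (PSpace d n) ℂ where
  toFun h := stdAddChar (symp d n h g)
  map_zero_eq_one' := by simp [symp_eq]
  map_add_eq_mul' a b := by rw [symp_add_left, AddChar.map_add_eq_mul]

lemma sympChar_injective : Function.Injective (sympChar (d := d) (n := n)) := by
  intro g g' hg
  have key (h : PSpace d n) : symp d n h g = symp d n h g' :=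
    ZMod.injective_stdAddChar (DFunLike.congr_fun hg h)
  ext i
  · simpa [symp_eq] using key (0, Pi.single i 1)
  · simpa [symp_eq] using key (Pi.single i 1, 0)

lemma exists_eq_sympChar (χ : AddChar (PSpace d n) ℂ) : ∃ g, sympChar g = χ :=
  ((Fintype.bijective_iff_injective_and_card _).2
    ⟨sympChar_injective, AddChar.card_eq.symm⟩).surjective χ

lemma exists_symp_of_Weyl_conj {V : Mat d n} (hV : V ≠ 0) {c : PSpace d n → ℂ}
    (hc : ∀ h, Weyl d n h * V * (Weyl d n h)ᴴ = c h • V) :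
    ∃ g, ∀ h, c h = stdAddChar (symp d n h g) := by
  have hzero : c 0 = 1 := smul_left_injective ℂ hV <| by
    simpa [Weyl_zero] using (hc 0).symm
  have hadd (a b : PSpace d n) : c (a + b) = c a * c b := smul_left_injective ℂ hV <| by
    obtain ⟨t, ht, hab⟩ := exists_Weyl_mul_Weyl a b
    calc c (a + b) • V = (t * star t) • (Weyl d n (a + b) * V * (Weyl d n (a + b))ᴴ) := by
          rw [Unitary.mul_star_self_of_mem (powers_tau_le_unitary ht), one_smul, hc]
      _ = Weyl d n a * Weyl d n b * V * (Weyl d n a * Weyl d n b)ᴴ := by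
          rw [hab, conjTranspose_smul, smul_mul_assoc, smul_mul_assoc, mul_smul_comm, smul_smul]
      _ = Weyl d n a * (Weyl d n b * V * (Weyl d n b)ᴴ) * (Weyl d n a)ᴴ := by
          simp only [conjTranspose_mul, mul_assoc]
      _ = (c a * c b) • V := by
          rw [hc, mul_smul_comm, smul_mul_assoc, hc, smul_smul, mul_comm]
  obtain ⟨g, hg⟩ := exists_eq_sympChar ⟨c, hzero, hadd⟩
  exact ⟨g, fun h => (DFunLike.congr_fun hg h).symm⟩

lemma exists_eq_smul_one_of_Weyl_conj {M : Mat d n}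
    (hM : ∀ a, Weyl d n a * M * (Weyl d n a)ᴴ = M) : ∃ c : ℂ, M = c • 1 := by
  have hcomm (a : PSpace d n) : Weyl d n a * M = M * Weyl d n a := by
    conv_rhs => rw [← hM a, mul_assoc _ _ (Weyl d n a), conjTranspose_Weyl_mul_self, mul_one]
  have hoff (a b : Fin n → ZMod d) (hab : a ≠ b) : M a b = 0 := by
    obtain ⟨i, hi⟩ := Function.ne_iff.1 hab
    have hent := congr_fun₂ (hcomm (Pi.single i 1, 0)) a b
    rw [Weyl_mk_zero, Zop_eq_diagonal, diagonal_mul, mul_diagonal, dotProduct_single_one,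
      dotProduct_single_one, mul_comm] at hent
    exact (mul_eq_mul_left_iff.1 hent).resolve_left (ZMod.injective_stdAddChar.ne hi)
  have hdiag (a : Fin n → ZMod d) : M a a = M 0 0 := by
    have hent := congr_fun₂ (hcomm (0, a)) a 0
    rwa [Weyl_zero_mk, Xop_mul_apply, mul_Xop_apply, sub_self, zero_add, eq_comm] at hent
  refine ⟨M 0 0, Matrix.ext fun a b => ?_⟩
  by_cases hab : a = b
  · simp [hab, hdiag]
  · simp [hab, hoff a b hab]

lemma exists_eq_smul_Weyl_of_mem_ppoly_one {V : Mat d n} (hV : V ∈ ppoly d n 1) :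
    ∃ (c : ℂ) (g : PSpace d n), V = c • Weyl d n g := by
  obtain ⟨hVu, hder⟩ := hV
  choose θ hθ using hder
  have hVV : Vᴴ * V = 1 := Unitary.star_mul_self_of_mem hVu
  have hconj (h : PSpace d n) :
      Weyl d n h * V * (Weyl d n h)ᴴ = Complex.exp (θ h * Complex.I) • V := by
    calc Weyl d n h * V * (Weyl d n h)ᴴ = pderiv d n h V * V := by
          rw [pderiv, mul_assoc _ Vᴴ, hVV, mul_one]
      _ = _ := by rw [hθ h, smul_mul_assoc, one_mul]
  have hV0 : V ≠ 0 := fun h0 => by simp [h0] at hVV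
  obtain ⟨g, hg⟩ := exists_symp_of_Weyl_conj hV0 hconj
  obtain ⟨c, hc⟩ := exists_eq_smul_one_of_Weyl_conj (M := V * (Weyl d n g)ᴴ) fun h => by
    have hψ := mem_unitary_of_norm_eq_one (AddChar.norm_apply stdAddChar (symp d n h g))
    calc Weyl d n h * (V * (Weyl d n g)ᴴ) * (Weyl d n h)ᴴ
        = (Weyl d n h * V * (Weyl d n h)ᴴ) * (Weyl d n h * Weyl d n g * (Weyl d n h)ᴴ)ᴴ := by
          simp only [conjTranspose_mul, conjTranspose_conjTranspose, mul_assoc]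
          rw [← mul_assoc (Weyl d n h)ᴴ, conjTranspose_Weyl_mul_self, one_mul]
      _ = V * (Weyl d n g)ᴴ := by
          rw [hconj, hg, Weyl_mul_Weyl_mul_conjTranspose, conjTranspose_smul, smul_mul_smul_comm,
            Unitary.mul_star_self_of_mem hψ, one_smul]
  refine ⟨c, g, ?_⟩
  calc V = V * (Weyl d n g)ᴴ * Weyl d n g := by
        rw [mul_assoc, conjTranspose_Weyl_mul_self, mul_one]
    _ = c • Weyl d n g := by rw [hc, smul_mul_assoc, one_mul]

end DegreeOne

section PpolySubsetCliff

lemma Weyl_mul_pderiv_neg (b : PSpace d n) (U : Mat d n) :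
    Weyl d n b * pderiv d n (-b) U = U * Weyl d n b * Uᴴ := by
  obtain ⟨t, ht, hb⟩ := exists_conjTranspose_Weyl (-b)
  rw [neg_neg] at hb
  have hb' : Weyl d n (-b) = star t • (Weyl d n b)ᴴ := by
    rw [← conjTranspose_smul, ← hb, conjTranspose_conjTranspose]
  rw [pderiv, hb, hb']
  simp only [smul_mul_assoc, mul_smul_comm, smul_smul, ← mul_assoc, Weyl_mul_conjTranspose_self,
    one_mul, Unitary.mul_star_self_of_mem (powers_tau_le_unitary ht), one_smul]

lemma ppoly_two_subset_cliff (hd : d = 2 ∨ Odd d) : ppoly d n 2 ⊆ cliff d n 2 := by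
  rintro U ⟨hU, hder⟩
  refine ⟨hU, ?_⟩
  rintro _ ⟨p, b, rfl⟩
  obtain ⟨c, g, hcg⟩ := exists_eq_smul_Weyl_of_mem_ppoly_one (hder (-b))
  obtain ⟨s, -, hbg⟩ := exists_Weyl_mul_Weyl b g
  have hconj : U * Weyl d n b * Uᴴ = (c * s) • Weyl d n (b + g) := by
    rw [← Weyl_mul_pderiv_neg, hcg, mul_smul_comm, hbg, smul_smul]
  have hpow : (c * s) ^ d • (1 : Mat d n) = (1 : ℂ) • 1 :=
    calc (c * s) ^ d • (1 : Mat d n) = ((c * s) • Weyl d n (b + g)) ^ d := by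
          rw [smul_pow, Weyl_pow_eq_one hd]
      _ = U * Weyl d n b ^ d * Uᴴ := by
          rw [← hconj]
          exact Units.conj_pow (Unitary.toUnits ⟨U, hU⟩) _ d
      _ = (1 : ℂ) • 1 := by
          rw [Weyl_pow_eq_one hd, mul_one, one_smul]
          exact Unitary.mul_star_self_of_mem hU
  have hroot : (c * s) ^ d = 1 := smul_left_injective ℂ (one_ne_zero (α := Mat d n)) hpow
  obtain ⟨j, -, hj⟩ := (Complex.isPrimitiveRoot_exp d (NeZero.ne d)).eq_pow_of_pow_eq_one hroot
  have hcs : c * s ∈ Submonoid.powers (tau d) := by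
    rw [← hj, ← omg, ← tau_sq, ← pow_mul]
    exact tau_pow_mem_powers _
  rw [mul_smul_comm, smul_mul_assoc, hconj, smul_smul]
  exact smul_Weyl_mem_pauliGroup (mul_mem (tau_pow_mem_powers _) hcs) _

lemma ppoly_succ_succ_subset_cliff {k : ℕ} (ih : ppoly d n (k + 1) ⊆ cliff d n (k + 1)) :
    ppoly d n (k + 2) ⊆ cliff d n (k + 2) := by
  rintro U ⟨hU, hder⟩
  refine ⟨hU, ?_⟩
  rintro _ ⟨p, b, rfl⟩
  rw [mul_smul_comm, smul_mul_assoc, ← Weyl_mul_pderiv_neg, ← smul_mul_assoc]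
  exact pauli_mul_mem_cliff (smul_Weyl_mem_pauliGroup (tau_pow_mem_powers _) b)
    (ih (hder (-b)))

end PpolySubsetCliff

theorem stmt9_general (d n : ℕ) [NeZero d] (hd : d.Prime)
    (k : ℕ) (hk : 2 ≤ k) :
    ppoly d n k = cliff d n k := by
  induction k, hk using Nat.le_induction with
  | base => exact (ppoly_two_subset_cliff hd.eq_two_or_odd').antisymm (cliff_subset_ppoly 1)
  | succ k hk ih =>
    obtain ⟨k, rfl⟩ := Nat.exists_eq_add_of_le' hk
    exact (ppoly_succ_succ_subset_cliff ih.le).antisymm (cliff_subset_ppoly (k + 2))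

theorem stmt9 (d n : ℕ) [NeZero d] (hd : d.Prime) (hn : 1 ≤ n)
    (k : ℕ) (hk : 2 ≤ k) :
    ppoly d n k = cliff d n k :=
  stmt9_general d n hd k hk

end CH
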